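/- The formula O_a(¬O_b p) is satisfiable in the k-structures semantics: there exists a 2-structure e_a for agent a and a world w such that (e_a, ∅, w) ⊨ L_a(¬O_b p) ∧ N_a(O_b p), for any fixed atomic proposition p. -/

import Mathlib

abbrev Atom := ℕ
abbrev World := Set Atom

/-- `KStr k` : the type of `k`-structures. A 0-structure is the trivial
empty object `PUnit.unit` (playing the role of `∅`); a `(k+1)`-structure is a
set of pairs of a world and a `k`-structure. Thus a 1-structure is a subset of
`W × {∅}`. -/
def KStr : ℕ → Type
  | 0 => PUnit
  | (k+1) => Set (World × KStr k)


def toSet {k : ℕ} (e : KStr (k+1)) : Set (World × KStr k) := e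

instance {k : ℕ} : Membership (World × KStr k) (KStr (k+1)) :=
  inferInstanceAs (Membership _ (Set (World × KStr k)))
instance {k : ℕ} : EmptyCollection (KStr (k+1)) :=
  inferInstanceAs (EmptyCollection (Set (World × KStr k)))
instance {k : ℕ} : Union (KStr (k+1)) :=
  inferInstanceAs (Union (Set (World × KStr k)))
instance {k : ℕ} : Compl (KStr (k+1)) :=
  inferInstanceAs (Compl (Set (World × KStr k)))

def unit0 : KStr 0 := PUnit.unit

/-- Formulas of the propositional multi-agent only-knowing language ONL_n
with modal operators L_a, N_a, L_b, N_b. -/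
inductive Formula : Type
  | atom : Atom → Formula
  | fls  : Formula
  | neg  : Formula → Formula
  | or   : Formula → Formula → Formula
  | La   : Formula → Formula
  | Na   : Formula → Formula
  | Lb   : Formula → Formula
  | Nb   : Formula → Formula

def Formula.and (α β : Formula) : Formula := .neg (.or (.neg α) (.neg β))
def Formula.imp (α β : Formula) : Formula := .or (.neg α) β
/-- O_a α := L_a α ∧ N_a ¬α -/
def Formula.Oa (α : Formula) : Formula := (Formula.La α).and (Formula.Na (.neg α))
/-- O_b α := L_b α ∧ N_b ¬α -/
def Formula.Ob (α : Formula) : Formula := (Formula.Lb α).and (Formula.Nb (.neg α))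

/-- Satisfaction at a (k,j)-model `(ea, eb, w)`. -/
def sat : (k : ℕ) → (j : ℕ) → KStr k → KStr j → World → Formula → Prop
  | _, _, _, _, w, .atom p => p ∈ w
  | _, _, _, _, _, .fls => False
  | k, j, ea, eb, w, .neg α => ¬ sat k j ea eb w α
  | k, j, ea, eb, w, .or α β => sat k j ea eb w α ∨ sat k j ea eb w β
  | 0, _, _, _, _, .La _ => True
  | (k+1), _, ea, _, _, .La α => ∀ p ∈ ea, sat (k+1) k ea p.2 p.1 α
  | 0, _, _, _, _, .Na _ => True
  | (k+1), _, ea, _, _, .Na α => ∀ p : World × KStr k, p ∉ ea → sat (k+1) k ea p.2 p.1 α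
  | _, 0, _, _, _, .Lb _ => True
  | k, (j+1), _, eb, _, .Lb α => ∀ p ∈ eb, sat j (j+1) p.2 eb p.1 α
  | _, 0, _, _, _, .Nb _ => True
  | k, (j+1), _, eb, _, .Nb α => ∀ p : World × KStr j, p ∉ eb → sat j (j+1) p.2 eb p.1 α

mutual
/-- a-depth of a formula -/
def depthA : Formula → ℕ
  | .atom _ => 1
  | .fls => 1
  | .neg α => depthA α
  | .or α β => max (depthA α) (depthA β)
  | .La α => depthA α
  | .Na α => depthA α
  | .Lb α => depthB α + 1
  | .Nb α => depthB α + 1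
/-- b-depth of a formula -/
def depthB : Formula → ℕ
  | .atom _ => 1
  | .fls => 1
  | .neg α => depthB α
  | .or α β => max (depthB α) (depthB β)
  | .Lb α => depthB α
  | .Nb α => depthB α
  | .La α => depthA α + 1
  | .Na α => depthA α + 1
end

/-- the restriction `e↓ₖ` of a structure -/
def restrict : (k : ℕ) → {m : ℕ} → KStr m → KStr k
  | 0, _, _ => unit0
  | (k+1), 0, _ => (∅ : Set (World × KStr k))
  | (k+1), (_+1), e => (fun p => (p.1, restrict k p.2)) '' (toSet e)

/-- validity: truth at all (k,j)-models of appropriate depth -/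
def valid (φ : Formula) : Prop :=
  ∀ (k j : ℕ), depthA φ ≤ k → depthB φ ≤ j →
    ∀ (ea : KStr k) (eb : KStr j) (w : World), sat k j ea eb w φ

def satisfiable (φ : Formula) : Prop :=
  ∃ (k j : ℕ) (ea : KStr k) (eb : KStr j) (w : World),
    depthA φ ≤ k ∧ depthB φ ≤ j ∧ sat k j ea eb w φ

/-- objective (non-modal) formulas -/
def objective : Formula → Prop
  | .atom _ => True
  | .fls => True
  | .neg α => objective α
  | .or α β => objective α ∧ objective β
  | .La _ => False
  | .Na _ => False
  | .Lb _ => False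
  | .Nb _ => False

/-- a-objective: all outermost modal operators are of agent b -/
def aObjective : Formula → Prop
  | .atom _ => True
  | .fls => True
  | .neg α => aObjective α
  | .or α β => aObjective α ∧ aObjective β
  | .La _ => False
  | .Na _ => False
  | .Lb _ => True
  | .Nb _ => True

/-- b-objective: all outermost modal operators are of agent a -/
def bObjective : Formula → Prop
  | .atom _ => True
  | .fls => True
  | .neg α => bObjective α
  | .or α β => bObjective α ∧ bObjective β
  | .La _ => True
  | .Na _ => True
  | .Lb _ => False
  | .Nb _ => False

/-- basic formulas: no N_a, N_b -/
def basic : Formula → Prop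
  | .atom _ => True
  | .fls => True
  | .neg α => basic α
  | .or α β => basic α ∧ basic β
  | .La α => basic α
  | .Lb α => basic α
  | .Na _ => False
  | .Nb _ => False

/-- set of a-objective formulas of b-depth ≤ d true at `(∅, e, w)` -/
def aTheory (d : ℕ) (e : KStr d) (w : World) : Set Formula :=
  {φ | aObjective φ ∧ depthB φ ≤ d ∧ sat 0 d unit0 e w φ}

def bTheory (d : ℕ) (e : KStr d) (w : World) : Set Formula :=
  {φ | bObjective φ ∧ depthA φ ≤ d ∧ sat d 0 e unit0 w φ}

/-- Obj⁺_a(e_a) -/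
def ObjA (d : ℕ) (ea : KStr (d+1)) : Set (Set Formula) :=
  {T | ∃ p : World × KStr d, p ∈ ea ∧ T = aTheory d p.2 p.1}

def ObjB (d : ℕ) (eb : KStr (d+1)) : Set (Set Formula) :=
  {T | ∃ p : World × KStr d, p ∈ eb ∧ T = bTheory d p.2 p.1}

/-- maximally satisfiable set of a-objective formulas of b-depth ≤ d -/
def maxSatA (d : ℕ) (S : Set Formula) : Prop :=
  (∀ φ ∈ S, aObjective φ ∧ depthB φ ≤ d) ∧
  (∃ (e : KStr d) (w : World), ∀ φ ∈ S, sat 0 d unit0 e w φ) ∧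
  (∀ ψ, aObjective ψ → depthB ψ ≤ d → ψ ∉ S →
    ¬ ∃ (e : KStr d) (w : World), ∀ φ ∈ insert ψ S, sat 0 d unit0 e w φ)

def maxSatB (d : ℕ) (S : Set Formula) : Prop :=
  (∀ φ ∈ S, bObjective φ ∧ depthA φ ≤ d) ∧
  (∃ (e : KStr d) (w : World), ∀ φ ∈ S, sat d 0 e unit0 w φ) ∧
  (∀ ψ, bObjective ψ → depthA ψ ≤ d → ψ ∉ S →
    ¬ ∃ (e : KStr d) (w : World), ∀ φ ∈ insert ψ S, sat d 0 e unit0 w φ)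

/-- `onlAux bA bB φ`: φ is admissible where `bA` records that N_a is banned
(we are in the scope of a b-modality) and `bB` that N_b is banned. -/
def onlAux : Bool → Bool → Formula → Prop
  | _, _, .atom _ => True
  | _, _, .fls => True
  | bA, bB, .neg α => onlAux bA bB α
  | bA, bB, .or α β => onlAux bA bB α ∧ onlAux bA bB β
  | bA, _, .La α => onlAux bA true α
  | bA, _, .Na α => bA = false ∧ onlAux bA true α
  | _, bB, .Lb α => onlAux true bB α
  | _, bB, .Nb α => bB = false ∧ onlAux true bB α

/-- ONL_n^- : no N_j in the scope of an L_i or N_i with i ≠ j -/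
def ONLminus (φ : Formula) : Prop := onlAux false false φ

inductive BoolComb (S : Set Formula) : Formula → Prop
  | base {φ} : φ ∈ S → BoolComb S φ
  | neg {φ} : BoolComb S φ → BoolComb S (.neg φ)
  | or {φ ψ} : BoolComb S φ → BoolComb S ψ → BoolComb S (.or φ ψ)

def stepL (S : Set Formula) : Set Formula :=
  {φ | BoolComb (S ∪ {ψ | ∃ α ∈ S, ψ = .La α ∨ ψ = .Na α ∨ ψ = .Lb α ∨ ψ = .Nb α}) φ}

/-- the hierarchy ONL_n^t (t ≥ 1), with ONL_n^1 = ONL_n^- -/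
def ONLt (t : ℕ) : Set Formula := stepL^[t-1] {φ | ONLminus φ}

def conjList : List Formula → Formula
  | [] => .neg .fls
  | (φ :: l) => φ.and (conjList l)

/-- instance of a propositional tautology -/
def Taut (φ : Formula) : Prop :=
  ∀ v : Formula → Bool, (∀ α, v (.neg α) = !v α) →
    (∀ α β, v (.or α β) = (v α || v β)) → v .fls = false → v φ = true

/-- K45_n provability (two agents) -/
inductive K45 : Formula → Prop
  | taut {φ} : Taut φ → K45 φ
  | kA (α β : Formula) : K45 ((Formula.La (α.imp β)).imp ((Formula.La α).imp (Formula.La β)))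
  | kB (α β : Formula) : K45 ((Formula.Lb (α.imp β)).imp ((Formula.Lb α).imp (Formula.Lb β)))
  | fourA (α : Formula) : K45 ((Formula.La α).imp (Formula.La (Formula.La α)))
  | fourB (α : Formula) : K45 ((Formula.Lb α).imp (Formula.Lb (Formula.Lb α)))
  | fiveA (α : Formula) : K45 ((Formula.neg (Formula.La α)).imp (Formula.La (Formula.neg (Formula.La α))))
  | fiveB (α : Formula) : K45 ((Formula.neg (Formula.Lb α)).imp (Formula.Lb (Formula.neg (Formula.Lb α))))
  | mp {α β} : K45 (α.imp β) → K45 α → K45 β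
  | necA {α} : K45 α → K45 (Formula.La α)
  | necB {α} : K45 α → K45 (Formula.Lb α)

def ConsSet (Γ : Set Formula) : Prop :=
  ∀ l : List Formula, (∀ φ ∈ l, φ ∈ Γ) → ¬ K45 (Formula.neg (conjList l))

/-- basic maximally K45_n-consistent set -/
def MCS (Γ : Set Formula) : Prop :=
  (∀ φ ∈ Γ, basic φ) ∧ ConsSet Γ ∧ ∀ φ, basic φ → (φ ∈ Γ ∨ Formula.neg φ ∈ Γ)

/-- worlds of the K45_n canonical model -/
def CW := {Γ : Set Formula // MCS Γ}

def RA (Γ Δ : CW) : Prop := ∀ α, Formula.La α ∈ Γ.val → α ∈ Δ.val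
def RB (Γ Δ : CW) : Prop := ∀ α, Formula.Lb α ∈ Γ.val → α ∈ Δ.val

/-- truth of basic formulas at a world of the canonical model -/
def csat (Γ : CW) : Formula → Prop
  | .atom p => Formula.atom p ∈ Γ.val
  | .fls => False
  | .neg α => ¬ csat Γ α
  | .or α β => csat Γ α ∨ csat Γ β
  | .La α => ∀ Δ : CW, RA Γ Δ → csat Δ α
  | .Lb α => ∀ Δ : CW, RB Γ Δ → csat Δ α
  | .Na _ => True
  | .Nb _ => True

/-- the propositional valuation [w] of a canonical world -/
def wval (Γ : CW) : World := {p | Formula.atom p ∈ Γ.val}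

/-- the (k,j)-correspondence structures; `corr true` is agent a's structure,
`corr false` agent b's -/
def corr : Bool → (k : ℕ) → CW → KStr k
  | _, 0, _ => unit0
  | ag, (k+1), Γ =>
    {p : World × KStr k |
      ∃ Δ : CW, (if ag then RA Γ Δ else RB Γ Δ) ∧ p.1 = wval Δ ∧ p.2 = corr (!ag) k Δ}

theorem sat_Ob_iff {k j : ℕ} (ea : KStr k) (eb : KStr (j+1)) (w : World) (α : Formula) :
    sat k (j+1) ea eb w α.Ob ↔ ∀ q, q ∈ eb ↔ sat j (j+1) q.2 eb q.1 α := by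
  simp only [Formula.Ob, Formula.and, sat, not_or, not_not]
  constructor
  · rintro ⟨hL, hN⟩ q
    exact ⟨hL q, fun hq => by_contra fun hq' => hN q hq' hq⟩
  · intro h
    exact ⟨fun q => (h q).1, fun q hq hα => hq ((h q).2 hα)⟩

theorem sat_La_neg_and_Na_iff {k j : ℕ} (ea : KStr (k+1)) (eb : KStr j) (w : World)
    (β : Formula) :
    sat (k+1) j ea eb w ((Formula.La (.neg β)).and (Formula.Na β)) ↔
      ∀ q, q ∈ ea ↔ ¬ sat (k+1) k ea q.2 q.1 β := by
  simp only [Formula.and, sat, not_or, not_not]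
  constructor
  · rintro ⟨hL, hN⟩ q
    exact ⟨hL q, fun hβ => by_contra fun hq => hβ (hN q hq)⟩
  · intro h
    exact ⟨fun q => (h q).1, fun q hq => by_contra fun hβ => hq ((h q).2 hβ)⟩

/-- O_a(¬O_b p) = L_a(¬O_b p) ∧ N_a(O_b p) is satisfiable:
there is a 2-structure e_a and a world w witnessing it. -/
theorem Oa_not_Ob_satisfiable (p : Atom) :
    ∃ (ea : KStr 2) (w : World),
      sat 2 1 ea (∅ : KStr 1) w
        ((Formula.La (Formula.neg (Formula.Ob (Formula.atom p)))).and
          (Formula.Na (Formula.Ob (Formula.atom p)))) := by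
  -- O_b p pins b's 1-structure down to the set of p-worlds; a considers possible everything else.
  refine ⟨{q | ¬ ∀ r, r ∈ q.2 ↔ p ∈ r.1}, ∅, (sat_La_neg_and_Na_iff _ _ _ _).2 fun q => ?_⟩
  exact (not_congr (sat_Ob_iff (j := 0) _ q.2 q.1 (.atom p))).symm
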